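/- Under the hypotheses of the variable-digit-restriction setup with density parameters α_k, and assuming the set 𝓜 = {m ≥ 1 : U_{m-1} ≠ [1,g-1]} is infinite, the series ∑_{a ∈ A_{g,𝒰}} a^{-σ} diverges for every real σ < (1/log g) ∑_{k=0}^{g-1} α_k log(g-k). -/

import Mathlib

open Finset Filter Real Topology

/-!
Fix `m` with `U m ≠ [1, g - 1]`, so that a nonzero leading digit outside `U m` exists. Then
`A_{g,𝒰}` has at least `∏_{i<m} (g - |U i|)` elements with exactly `m + 1` digits, each
below `g^(m+1)`. Since `|U i| = k` for a proportion `α k` of the indices `i`, this product is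
`exp (m (L + o(1)))` with `L = ∑ α_k log (g - k)`, so for `0 < σ < L / log g` these elements
alone contribute `exp (m (L - σ log g + o(1)))` to the series, which is unbounded over the
infinitely many admissible `m`. For `σ ≤ 0` every term is at least `1` and `A_{g,𝒰}` is
infinite.
-/

theorem tendsto_sum_comp_div_of_density {g : ℕ} {c : ℕ → ℕ} (hc : ∀ i, c i < g) {α : ℕ → ℝ}
    (hα : ∀ k < g, Tendsto (fun m : ℕ => ((#{i ∈ range m | c i = k} : ℝ) - α k * m) / m)
      atTop (𝓝 0))
    (f : ℕ → ℝ) :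
    Tendsto (fun m : ℕ => (∑ i ∈ range m, f (c i)) / m) atTop
      (𝓝 (∑ k ∈ range g, α k * f k)) := by
  have hfiber (m : ℕ) : (∑ i ∈ range m, f (c i)) / m =
      ∑ k ∈ range g, (#{i ∈ range m | c i = k} : ℝ) / m * f k := by
    rw [← sum_fiberwise_of_maps_to (g := c) (t := range g) (fun i _ => mem_range.2 (hc i)),
      sum_div]
    refine sum_congr rfl fun k _ => ?_
    rw [sum_congr rfl fun i hi => by rw [(mem_filter.1 hi).2], sum_const, nsmul_eq_mul,
      mul_div_right_comm]
  simp only [hfiber]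
  refine tendsto_finsetSum _ fun k hk => Tendsto.mul_const _ ?_
  have hk := (hα k (mem_range.1 hk)).add_const (α k)
  rw [zero_add] at hk
  refine hk.congr' ?_
  filter_upwards [eventually_ne_atTop 0] with m hm
  field_simp
  ring

theorem tendsto_sub_mul_atTop_of_tendsto_div {a : ℕ → ℝ} {L c : ℝ}
    (ha : Tendsto (fun m : ℕ => a m / m) atTop (𝓝 L)) (hc : c < L) :
    Tendsto (fun m : ℕ => a m - c * m) atTop atTop := by
  refine (tendsto_natCast_atTop_atTop.atTop_mul_pos (sub_pos.2 hc) (ha.sub_const c)).congr' ?_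
  filter_upwards [eventually_ne_atTop 0] with m hm
  field_simp

theorem not_summable_of_one_le {ι : Type*} [Infinite ι] {f : ι → ℝ} (hf : ∀ i, 1 ≤ f i) :
    ¬ Summable f := fun h =>
  have ⟨i, hi⟩ := (h.tendsto_cofinite_zero.eventually (gt_mem_nhds one_pos)).exists
  (hf i).not_gt hi

theorem nonempty_erase_zero_sdiff {g : ℕ} {u : Finset ℕ} (hu : u ⊂ range g)
    (hne : u ≠ Icc 1 (g - 1)) : ((range g \ u).erase 0).Nonempty := by
  obtain ⟨x, hx, hxu⟩ := exists_of_ssubset hu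
  rw [nonempty_iff_ne_empty, Ne, erase_eq_empty_iff,
    or_iff_right (ne_empty_of_mem (mem_sdiff.2 ⟨hx, hxu⟩))]
  refine fun h => hne (ext fun d => ?_)
  have hd := Finset.ext_iff.1 h d
  have hdu : d ∈ u → d ∈ range g := fun h => hu.subset h
  simp only [mem_range, mem_singleton] at hd hdu
  rw [mem_Icc]
  grind

namespace MissingDigits

/-- The set `A_{g,𝒰}`. -/
def digitSet (g : ℕ) (U : ℕ → Finset ℕ) : Set ℕ :=
  {n | 0 < n ∧ ∀ i < (Nat.digits g n).length, (Nat.digits g n).getD i 0 ∉ U i}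

def allowedDigits (g : ℕ) (U : ℕ → Finset ℕ) (m i : ℕ) : Finset ℕ :=
  if i = m then (range g \ U i).erase 0 else range g \ U i

/-- The elements of `digitSet g U` with exactly `m + 1` digits, listed by their digit vectors. -/
def block (g : ℕ) (U : ℕ → Finset ℕ) (m : ℕ) : Finset ℕ :=
  (Fintype.piFinset fun i : Fin (m + 1) => allowedDigits g U m i).image
    fun f => Nat.ofDigits g (List.ofFn f)

variable {g : ℕ} {U : ℕ → Finset ℕ} {m : ℕ}

theorem digits_ofDigits_ofFn (hg : 2 ≤ g) {f : Fin (m + 1) → ℕ}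
    (hf : f ∈ Fintype.piFinset fun i : Fin (m + 1) => allowedDigits g U m i) :
    Nat.digits g (Nat.ofDigits g (List.ofFn f)) = List.ofFn f := by
  rw [Fintype.mem_piFinset] at hf
  refine Nat.digits_ofDigits g hg _ (fun l hl => ?_) fun _ => ?_
  · obtain ⟨i, rfl⟩ := List.mem_ofFn.1 hl
    have hi := hf i
    unfold allowedDigits at hi
    split_ifs at hi <;> simp_all
  · rw [List.getLast_ofFn]
    have hlast := hf (Fin.last m)
    simp only [allowedDigits, Fin.val_last, if_pos, mem_erase] at hlast
    exact hlast.1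

theorem length_digits_of_mem_block (hg : 2 ≤ g) {n : ℕ} (hn : n ∈ block g U m) :
    (Nat.digits g n).length = m + 1 := by
  obtain ⟨f, hf, rfl⟩ := mem_image.1 hn
  rw [digits_ofDigits_ofFn hg hf, List.length_ofFn]

theorem block_subset_digitSet (hg : 2 ≤ g) : ↑(block g U m) ⊆ digitSet g U := by
  intro n hn
  refine ⟨Nat.pos_of_ne_zero fun h0 => ?_, fun i hi => ?_⟩
  · simpa [h0] using length_digits_of_mem_block hg hn
  obtain ⟨f, hf, rfl⟩ := mem_image.1 hn
  rw [digits_ofDigits_ofFn hg hf, List.length_ofFn] at hi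
  rw [digits_ofDigits_ofFn hg hf, List.getD_eq_getElem _ _ (by simpa using hi),
    List.getElem_ofFn]
  have hfi := Fintype.mem_piFinset.1 hf ⟨i, hi⟩
  unfold allowedDigits at hfi
  split_ifs at hfi <;> simp_all

theorem card_block (hg : 2 ≤ g) (hU : ∀ i, U i ⊆ range g) (m : ℕ) :
    #(block g U m) = (∏ i ∈ range m, (g - #(U i))) * #((range g \ U m).erase 0) := by
  have hinj : Set.InjOn (fun f : Fin (m + 1) → ℕ => Nat.ofDigits g (List.ofFn f))
      (Fintype.piFinset fun i : Fin (m + 1) => allowedDigits g U m i) := fun f hf f' hf' h =>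
    List.ofFn_injective <| by
      rw [← digits_ofDigits_ofFn hg hf, ← digits_ofDigits_ofFn hg hf']
      exact congrArg _ h
  rw [block, card_image_of_injOn hinj, Fintype.card_piFinset,
    Fin.prod_univ_eq_prod_range (fun i => #(allowedDigits g U m i)), prod_range_succ]
  congr 1
  · refine prod_congr rfl fun i hi => ?_
    rw [allowedDigits, if_neg (mem_range.1 hi).ne, card_sdiff_of_subset (hU i), card_range]
  · rw [allowedDigits, if_pos rfl]

theorem exp_le_sum_block (hg : 2 ≤ g) (hU : ∀ i, U i ⊂ range g) (hm : U m ≠ Icc 1 (g - 1))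
    {σ : ℝ} (hσ : 0 ≤ σ) :
    exp (∑ i ∈ range m, log ((g : ℝ) - #(U i)) - σ * log g * (m + 1)) ≤
      ∑ n ∈ block g U m, (n : ℝ) ^ (-σ) := by
  have hcard_lt (i : ℕ) : #(U i) < g := (card_lt_card (hU i)).trans_eq (card_range g)
  have hcard : ∏ i ∈ range m, ((g : ℝ) - #(U i)) ≤ #(block g U m) := by
    have hprod : ∏ i ∈ range m, ((g - #(U i) : ℕ) : ℝ) = ∏ i ∈ range m, ((g : ℝ) - #(U i)) :=
      prod_congr rfl fun i _ => Nat.cast_sub (hcard_lt i).le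
    rw [card_block hg (fun i => (hU i).subset) m, Nat.cast_mul, Nat.cast_prod, ← hprod]
    exact le_mul_of_one_le_right (by positivity)
      (Nat.one_le_cast.2 (card_pos.2 (nonempty_erase_zero_sdiff (hU m) hm)))
  have hterm (n : ℕ) (hn : n ∈ block g U m) : ((g : ℝ) ^ (m + 1)) ^ (-σ) ≤ (n : ℝ) ^ (-σ) := by
    have hlt : n < g ^ (m + 1) :=
      (Nat.digits_length_le_iff hg n).1 (length_digits_of_mem_block hg hn).le
    exact rpow_le_rpow_of_nonpos (by exact_mod_cast (block_subset_digitSet hg hn).1)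
      (by exact_mod_cast hlt.le) (neg_nonpos.2 hσ)
  calc exp (∑ i ∈ range m, log ((g : ℝ) - #(U i)) - σ * log g * (m + 1))
      = (∏ i ∈ range m, ((g : ℝ) - #(U i))) * ((g : ℝ) ^ (m + 1)) ^ (-σ) := by
        rw [sub_eq_add_neg, exp_add, exp_sum, rpow_def_of_pos (by positivity), log_pow]
        congr 1
        · refine prod_congr rfl fun i _ => exp_log (sub_pos.2 ?_)
          exact_mod_cast hcard_lt i
        · push_cast
          ring_nf
    _ ≤ #(block g U m) * ((g : ℝ) ^ (m + 1)) ^ (-σ) := by gcongr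
    _ ≤ ∑ n ∈ block g U m, (n : ℝ) ^ (-σ) := by
        rw [← nsmul_eq_mul]
        exact card_nsmul_le_sum _ _ _ hterm

theorem not_bddAbove_digitSet (hg : 2 ≤ g) (hU : ∀ i, U i ⊂ range g)
    (hM : ∃ᶠ m in atTop, U m ≠ Icc 1 (g - 1)) : ¬ BddAbove (digitSet g U) := by
  rintro ⟨N, hN⟩
  obtain ⟨m, hm, hNm⟩ := (hM.and_eventually (eventually_gt_atTop N)).exists
  obtain ⟨n, hn⟩ : (block g U m).Nonempty := by
    rw [← card_pos, card_block hg (fun i => (hU i).subset) m]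
    refine Nat.mul_pos (prod_pos fun i _ => Nat.sub_pos_of_lt ?_)
      (card_pos.2 (nonempty_erase_zero_sdiff (hU m) hm))
    exact (card_lt_card (hU i)).trans_eq (card_range g)
  have hgm : g ^ m ≤ n :=
    (Nat.lt_digits_length_iff hg n).1 (length_digits_of_mem_block hg hn).ge
  have hnN := hN (block_subset_digitSet hg hn)
  have := Nat.lt_pow_self (n := m) hg
  omega

end MissingDigits

open MissingDigits

theorem variable_missing_digits_diverges_general (g : ℕ) (hg : 2 ≤ g)
    (U : ℕ → Finset ℕ) (hU : ∀ i, U i ⊂ Finset.range g)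
    (hM : {m : ℕ | 0 < m ∧ U (m - 1) ≠ Finset.Icc 1 (g - 1)}.Infinite)
    (α : ℕ → ℝ)
    (hε : ∀ k < g, Filter.Tendsto
      (fun m : ℕ =>
        (((Finset.range m).filter (fun i => (U i).card = k)).card - α k * m) / m)
      Filter.atTop (nhds 0))
    (σ : ℝ)
    (hσ : σ < (∑ k ∈ Finset.range g, α k * Real.log (g - k)) / Real.log g) :
    ¬ Summable (fun a : {n : ℕ // 0 < n ∧
        ∀ i < (Nat.digits g n).length, (Nat.digits g n).getD i 0 ∉ U i} =>
      ((a : ℕ) : ℝ) ^ (-σ)) := by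
  intro hsum
  change Summable (fun a : digitSet g U => ((a : ℕ) : ℝ) ^ (-σ)) at hsum
  have hM' : ∃ᶠ m in atTop, U m ≠ Icc 1 (g - 1) := (tendsto_sub_atTop_nat 1).frequently
    ((Nat.frequently_atTop_iff_infinite.2 hM).mono fun _ hm => hm.2)
  rcases le_or_gt σ 0 with hσ0 | hσ0
  · have := (Set.infinite_of_not_bddAbove (not_bddAbove_digitSet hg hU hM')).to_subtype
    exact not_summable_of_one_le (fun a => one_le_rpow (by exact_mod_cast a.2.1) (by linarith))
      hsum
  have hlog : σ * log g < ∑ k ∈ range g, α k * log (g - k) :=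
    (lt_div_iff₀ (log_pos (by exact_mod_cast hg))).1 hσ
  have hgrowth : Tendsto (fun m : ℕ =>
      exp (∑ i ∈ range m, log ((g : ℝ) - #(U i)) - σ * log g * (m + 1))) atTop atTop := by
    refine tendsto_exp_atTop.comp <| (tendsto_atTop_add_const_right _ (-(σ * log g))
      (tendsto_sub_mul_atTop_of_tendsto_div (tendsto_sum_comp_div_of_density
        (fun i => (card_lt_card (hU i)).trans_eq (card_range g)) hε _) hlog)).congr fun m => ?_
    ring
  set T := ∑' a : digitSet g U, (a : ℝ) ^ (-σ)
  obtain ⟨m, hm, hbig⟩ := (hM'.and_eventually (hgrowth.eventually_gt_atTop T)).exists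
  have hblock : ∑ n ∈ block g U m, (n : ℝ) ^ (-σ) ≤ T := by
    classical
    rw [← sum_subtype_of_mem _ fun n hn => block_subset_digitSet hg hn]
    exact hsum.sum_le_tsum _ fun a _ => rpow_nonneg a.1.cast_nonneg _
  exact (hbig.trans_le ((exp_le_sum_block hg hU hm hσ0.le).trans hblock)).false

/-- Divergence half of the variable-digit-restriction theorem: with 𝓜 infinite and
digit-size densities α_k (error terms ε_k(m)/m → 0), the series ∑ a^{-σ} over
A_{g,𝒰} diverges for every σ < (1/log g) ∑_k α_k log(g-k). -/
theorem variable_missing_digits_diverges (g : ℕ) (hg : 2 ≤ g)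
    (U : ℕ → Finset ℕ) (hU : ∀ i, U i ⊂ Finset.range g)
    (hM : {m : ℕ | 0 < m ∧ U (m - 1) ≠ Finset.Icc 1 (g - 1)}.Infinite)
    (α : ℕ → ℝ) (hα : ∀ k < g, 0 ≤ α k)
    (hε : ∀ k < g, Filter.Tendsto
      (fun m : ℕ =>
        (((Finset.range m).filter (fun i => (U i).card = k)).card - α k * m) / m)
      Filter.atTop (nhds 0))
    (σ : ℝ)
    (hσ : σ < (∑ k ∈ Finset.range g, α k * Real.log (g - k)) / Real.log g) :
    ¬ Summable (fun a : {n : ℕ // 0 < n ∧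
        ∀ i < (Nat.digits g n).length, (Nat.digits g n).getD i 0 ∉ U i} =>
      ((a : ℕ) : ℝ) ^ (-σ)) :=
  variable_missing_digits_diverges_general g hg U hU hM α hε σ hσ
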